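/- arXiv:0804.3071 — 2 statements merged into one kernel-verified Lean document; each statement's English description precedes it below -/
import Mathlib

section
/- The two-diagonal matrices satisfy the commutation relation U^{S,t}_{t+} · U^{S,t+1}_{S-} = U^{S,t}_{S-} · U^{S-1,t}_{t+}, and the common product U^{S,t}_{t+S-} has entries: (N+S-1-x)(N+S-2-x) if y=x+1; (N+S-1-x)(T-t-S+2x+1) if y=x; x(T-t-S+x) if y=x-1; and 0 otherwise. -/
open Finset

/-- U^{S,t}_{t+}(x,y): N+S-1-x if y=x+1, T-t-S+x if y=x, else 0.
Parameters N T S t are integers here. -/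
noncomputable def Utp (N T S t : ℤ) (x y : ℤ) : ℝ :=
  if y = x + 1 then (N : ℝ) + S - 1 - x
  else if y = x then (T : ℝ) - t - S + x
  else 0

/-- U^{S,t}_{S-}(x,y): x if y=x-1, S+N-1-x if y=x, else 0. -/
noncomputable def USm (N T S t : ℤ) (x y : ℤ) : ℝ :=
  if y = x - 1 then (x : ℝ)
  else if y = x then (S : ℝ) + N - 1 - x
  else 0

/-- The common product U^{S,t}_{t+S-}. -/
noncomputable def UtpSm (N T S t : ℤ) (x y : ℤ) : ℝ :=
  if y = x + 1 then ((N : ℝ) + S - 1 - x) * ((N : ℝ) + S - 2 - x)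
  else if y = x then ((N : ℝ) + S - 1 - x) * ((T : ℝ) - t - S + 2 * x + 1)
  else if y = x - 1 then (x : ℝ) * ((T : ℝ) - t - S + x)
  else 0

theorem sum_Icc_sub_one_add_one {M : Type*} [AddCommMonoid M] (x : ℤ) (f : ℤ → M) :
    ∑ y ∈ Icc (x - 1) (x + 1), f y = f (x - 1) + f x + f (x + 1) := by
  have hIcc : Icc (x - 1) (x + 1) = {x - 1, x, x + 1} := by
    ext y
    simp only [mem_Icc, mem_insert, mem_singleton]
    omega
  rw [hIcc, sum_insert (by simp only [mem_insert, mem_singleton]; omega), sum_pair (by omega),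
    add_assoc]

theorem Utp_sub_one (N T S t x : ℤ) : Utp N T S t x (x - 1) = 0 := by
  rw [Utp, if_neg (by omega), if_neg (by omega)]

theorem USm_add_one (N T S t x : ℤ) : USm N T S t x (x + 1) = 0 := by
  rw [USm, if_neg (by omega), if_neg (by omega)]

theorem sum_Utp_mul_USm (N T S t x z : ℤ) :
    ∑ y ∈ Icc (x - 1) (x + 1), Utp N T S t x y * USm N T S (t + 1) y z = UtpSm N T S t x z := by
  rw [sum_Icc_sub_one_add_one, Utp_sub_one, zero_mul, zero_add]
  simp only [Utp, USm, UtpSm]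
  split_ifs <;> first | omega | (push_cast; ring)

theorem sum_USm_mul_Utp (N T S t x z : ℤ) :
    ∑ y ∈ Icc (x - 1) (x + 1), USm N T S t x y * Utp N T (S - 1) t y z = UtpSm N T S t x z := by
  rw [sum_Icc_sub_one_add_one, USm_add_one, zero_mul, add_zero]
  simp only [Utp, USm, UtpSm]
  split_ifs <;> first | omega | (push_cast; ring)

/-- Commutation relation U^{S,t}_{t+} · U^{S,t+1}_{S-} = U^{S,t}_{S-} · U^{S-1,t}_{t+},
with common product U^{S,t}_{t+S-}.  The matrix product (AB)(x,z) = Σ_y A(x,y)B(y,z)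
reduces to a sum over y ∈ {x-1, x, x+1} since all matrices are two-diagonal. -/
theorem U_commutation (N T S t : ℤ) :
    (∀ x z : ℤ,
      ∑ y ∈ Finset.Icc (x - 1) (x + 1), Utp N T S t x y * USm N T S (t + 1) y z =
        ∑ y ∈ Finset.Icc (x - 1) (x + 1), USm N T S t x y * Utp N T (S - 1) t y z) ∧
    (∀ x z : ℤ,
      ∑ y ∈ Finset.Icc (x - 1) (x + 1), Utp N T S t x y * USm N T S (t + 1) y z =
        UtpSm N T S t x z) :=
  ⟨fun x z => by rw [sum_Utp_mul_USm, sum_USm_mul_Utp], sum_Utp_mul_USm N T S t⟩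
end

section
/- The co-transition probabilities of the Markov chain of sections are given by: Prob{X(t-1)=(y_1,…,y_N) | X(t)=(x_1,…,x_N)} = [∏_{i<j}(y_j-y_i) · ∏_{i: y_i=x_i-1} x_i · ∏_{i: y_i=x_i}(t+N-1-x_i)] / [(t)_N · ∏_{i<j}(x_j-x_i)] when all y_i-x_i ∈ {-1,0}, and 0 otherwise. Equivalently, this expression equals [Prob{X(t)=x | X(t-1)=y} · ρ_{S,t-1}(y)] / ρ_{S,t}(x). -/
open Finset

noncomputable def poch (a : ℝ) (n : ℕ) : ℝ := ∏ k ∈ Finset.range n, (a + k)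

noncomputable def pairProd {N : ℕ} (f : Fin N → ℤ) : ℝ :=
  ∏ p ∈ Finset.univ.filter (fun p : Fin N × Fin N => p.1 < p.2), ((f p.2 - f p.1 : ℤ) : ℝ)

noncomputable def secX (N T S t : ℕ) : Finset ℤ :=
  Finset.Icc (max 0 ((t : ℤ) + S - T)) (min ((t : ℤ) + N - 1) ((S : ℤ) + N - 1))

noncomputable def Xcal (N T S t : ℕ) : Finset (Fin N → ℤ) :=
  (Fintype.piFinset fun _ => secX N T S t).filter
    (fun f => ∀ i j : Fin N, i < j → f i < f j)

/-- Forward transition P^{S,t}_{t+}. -/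
noncomputable def Ptp (N T S t : ℕ) (X Y : Fin N → ℤ) : ℝ :=
  if ∀ i, Y i = X i ∨ Y i = X i + 1 then
    (pairProd Y *
      ∏ i, (if Y i = X i + 1 then (N : ℝ) + S - X i - 1 else (X i : ℝ) + T - t - S)) /
      (poch ((T : ℝ) - t) N * pairProd X)
  else 0

/-- Co-transition probability P^{S,t}_{t-}. -/
noncomputable def Ptm (N T S t : ℕ) (X Y : Fin N → ℤ) : ℝ :=
  if ∀ i, Y i = X i ∨ Y i = X i - 1 then
    (pairProd Y *
      ∏ i, (if Y i = X i - 1 then (X i : ℝ) else (t : ℝ) + N - 1 - X i)) /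
      (poch (t : ℝ) N * pairProd X)
  else 0

noncomputable def w (N T S t : ℕ) (x : ℤ) : ℝ :=
  1 / ((Nat.factorial x.toNat : ℝ) * (Nat.factorial ((t : ℤ) + N - 1 - x).toNat : ℝ) *
    (Nat.factorial ((S : ℤ) + N - 1 - x).toNat : ℝ) *
    (Nat.factorial ((T : ℤ) - t - S + x).toNat : ℝ))

noncomputable def Zc (N T S t : ℕ) : ℝ :=
  (∏ j ∈ Finset.range N,
      (poch ((t : ℝ) + 1) j * poch ((T : ℝ) - t + 1) j *
        (Nat.factorial (S + N - 1 - j) : ℝ) * (Nat.factorial (T - S + j) : ℝ)) /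
      (poch ((T : ℝ) + 1) j * (Nat.factorial j : ℝ))) *
    ((Nat.factorial t : ℝ) * (Nat.factorial (T - t) : ℝ) / (Nat.factorial T : ℝ)) ^ N

noncomputable def rho (N T S t : ℕ) (Y : Fin N → ℤ) : ℝ :=
  Zc N T S t * (pairProd Y) ^ 2 * ∏ i, w N T S t (Y i)

/-! Clearing denominators, the claim is the detailed-balance identity `ρ_t(x) P_{t-}(x, y) = ρ_{t-1}(y) P_{t+}(y, x)`,
which is checked factor by factor. The Vandermonde factors give `Δ(x) Δ(y)` on both sides. In each
coordinate, moving from `w^{S,t}(x)` to `w^{S,t-1}(y)` shifts two of the four factorials by one,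
and the resulting linear factors are exactly the local factors of the two transition kernels.
Finally the normalising constants satisfy `Z_{t-1} (t)_N = Z_t (T-t+1)_N`, because the Pochhammer
symbols in the `j`-th factor of `Z` shift by one as `t` moves. -/

lemma poch_pos {a : ℝ} (ha : 0 < a) (n : ℕ) : 0 < poch a n :=
  prod_pos fun k _ => by positivity

lemma poch_mul_add (a : ℝ) (n : ℕ) : poch a n * (a + n) = a * poch (a + 1) n := by
  have h : poch a (n + 1) = a * poch (a + 1) n := by
    rw [poch, prod_range_succ', mul_comm]
    simp only [poch, Nat.cast_add, Nat.cast_one, Nat.cast_zero, add_zero]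
    congr 1
    exact prod_congr rfl fun k _ => by ring
  rw [← h, poch, poch, prod_range_succ]

lemma prod_mul_pow_mul_poch (N : ℕ) (G : ℕ → ℝ) (Q a : ℝ) :
    (∏ j ∈ range N, G j) * Q ^ N * poch a N = ∏ j ∈ range N, G j * Q * (a + j) := by
  rw [poch, ← Finset.card_range N, ← prod_const, card_range, prod_mul_distrib, prod_mul_distrib]

lemma pairProd_pos {N : ℕ} {f : Fin N → ℤ} (hf : ∀ i j : Fin N, i < j → f i < f j) :
    0 < pairProd f :=
  prod_pos fun p hp => by
    have := hf p.1 p.2 (mem_filter.mp hp).2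
    exact_mod_cast sub_pos.mpr this

noncomputable def invFact (z : ℤ) : ℝ := (Nat.factorial z.toNat : ℝ)⁻¹

lemma intCast_succ_mul_invFact_succ {z : ℤ} (hz : 0 ≤ z) :
    ((z + 1 : ℤ) : ℝ) * invFact (z + 1) = invFact z := by
  obtain ⟨n, rfl⟩ := Int.eq_ofNat_of_zero_le hz
  have h : ((n : ℤ) + 1).toNat = n + 1 := by omega
  rw [invFact, invFact, h, Int.toNat_natCast, Nat.factorial_succ, Nat.cast_mul, mul_inv,
    ← mul_assoc]
  push_cast
  rw [mul_inv_cancel₀ (by positivity), one_mul]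

lemma w_eq (N T S t : ℕ) (x : ℤ) :
    w N T S t x = invFact x * invFact (t + N - 1 - x) * invFact (S + N - 1 - x) *
      invFact (T - t - S + x) := by
  simp only [w, invFact, one_div, mul_inv]

lemma w_pos (N T S t : ℕ) (x : ℤ) : 0 < w N T S t x := by
  simp only [w_eq, invFact]
  positivity

lemma Zc_pos (N T S t : ℕ) (ht : t ≤ T) : 0 < Zc N T S t := by
  have hTt : (0 : ℝ) < T - t + 1 := by
    have : (t : ℝ) ≤ T := by exact_mod_cast ht
    linarith
  unfold Zc
  refine mul_pos (prod_pos fun j _ => ?_) (by positivity)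
  have := poch_pos (by positivity : (0 : ℝ) < t + 1) j
  have := poch_pos hTt j
  have := poch_pos (by positivity : (0 : ℝ) < T + 1) j
  positivity

lemma rho_pos (N T S t : ℕ) (ht : t ≤ T) {X : Fin N → ℤ}
    (hX : ∀ i j : Fin N, i < j → X i < X j) : 0 < rho N T S t X := by
  have := Zc_pos N T S t ht
  have := pairProd_pos hX
  have : 0 < ∏ i, w N T S t (X i) := prod_pos fun i _ => w_pos N T S t (X i)
  unfold rho
  positivity

lemma w_succ_balance {N T S s : ℕ} {x y : ℤ} (hx : x ∈ secX N T S (s + 1))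
    (hy : y ∈ secX N T S s) (hxy : y = x ∨ y = x - 1) :
    (if y = x - 1 then (x : ℝ) else ((s + 1 : ℕ) : ℝ) + N - 1 - x) * w N T S (s + 1) x =
      (if x = y + 1 then (N : ℝ) + S - y - 1 else (y : ℝ) + T - s - S) * w N T S s y := by
  simp only [secX, mem_Icc, max_le_iff, le_min_iff] at hx hy
  simp only [w_eq]
  rcases hxy with rfl | hxy
  · rw [if_neg (by omega), if_neg (by omega),
      show ((s + 1 : ℕ) : ℤ) + N - 1 - y = (s + N - 1 - y) + 1 by push_cast; ring,
      show (T : ℤ) - s - S + y = (T - (s + 1 : ℕ) - S + y) + 1 by push_cast; ring,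
      ← intCast_succ_mul_invFact_succ (z := s + N - 1 - y) (by omega),
      ← intCast_succ_mul_invFact_succ (z := T - (s + 1 : ℕ) - S + y) (by omega)]
    push_cast
    ring
  · obtain rfl : x = y + 1 := by omega
    rw [if_pos (by ring), if_pos rfl,
      show ((s + 1 : ℕ) : ℤ) + N - 1 - (y + 1) = s + N - 1 - y by push_cast; ring,
      show (T : ℤ) - (s + 1 : ℕ) - S + (y + 1) = T - s - S + y by push_cast; ring,
      show (S : ℤ) + N - 1 - y = (S + N - 1 - (y + 1)) + 1 by ring,
      ← intCast_succ_mul_invFact_succ (z := y) (by omega),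
      ← intCast_succ_mul_invFact_succ (z := S + N - 1 - (y + 1)) (by omega)]
    push_cast
    ring

lemma Zc_mul_poch_succ (N T S s : ℕ) (hs : s < T) :
    Zc N T S s * poch ((s : ℝ) + 1) N = Zc N T S (s + 1) * poch ((T : ℝ) - s) N := by
  have hT : T - s = T - (s + 1) + 1 := by omega
  have hQ : (Nat.factorial s * Nat.factorial (T - s) : ℝ) * (s + 1) =
      (Nat.factorial (s + 1) * Nat.factorial (T - (s + 1)) : ℝ) * (T - s) := by
    rw [hT, Nat.factorial_succ, Nat.factorial_succ]
    push_cast [Nat.cast_sub (Nat.succ_le_of_lt hs)]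
    ring
  unfold Zc
  rw [prod_mul_pow_mul_poch, prod_mul_pow_mul_poch]
  refine prod_congr rfl fun j _ => ?_
  have h1 := poch_mul_add ((s : ℝ) + 1) j
  have h2 := poch_mul_add ((T : ℝ) - s) j
  push_cast at h1 h2 ⊢
  rw [show (T : ℝ) - (s + 1) + 1 = T - s by ring]
  -- after the Pochhammer shifts `h1`, `h2` the `j`-th factor reduces to `hQ`, i.e. to
  -- `(s+1) Q_s = (T-s) Q_{s+1}` for the prefactor `Q_t = t! (T-t)! / T!` of `Zc`
  set C := (Nat.factorial (S + N - 1 - j) : ℝ) * Nat.factorial (T - S + j) /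
    (poch (T + 1) j * Nat.factorial j)
  linear_combination (poch ((T : ℝ) - s + 1) j * C * Nat.factorial s * Nat.factorial (T - s) /
      Nat.factorial T) * h1 -
    (poch ((s : ℝ) + 1 + 1) j * C * Nat.factorial (s + 1) * Nat.factorial (T - (s + 1)) /
      Nat.factorial T) * h2 +
    (poch ((s : ℝ) + 1 + 1) j * poch ((T : ℝ) - s + 1) j * C / Nat.factorial T) * hQ

lemma Ptm_mul_rho_eq {N T S s : ℕ} (hs : s < T) {X Y : Fin N → ℤ}
    (hX : X ∈ Xcal N T S (s + 1)) (hY : Y ∈ Xcal N T S s) :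
    Ptm N T S (s + 1) X Y * rho N T S (s + 1) X = Ptp N T S s Y X * rho N T S s Y := by
  simp only [Xcal, mem_filter, Fintype.mem_piFinset] at hX hY
  obtain ⟨hXsec, hXmono⟩ := hX
  obtain ⟨hYsec, hYmono⟩ := hY
  have hpX := pairProd_pos hXmono
  have hpY := pairProd_pos hYmono
  unfold Ptm Ptp rho
  by_cases hstep : ∀ i, Y i = X i ∨ Y i = X i - 1
  · rw [if_pos hstep, if_pos fun i => by rcases hstep i with h | h <;> omega]
    have hsites := prod_congr rfl fun i (_ : i ∈ univ) =>
      w_succ_balance (hXsec i) (hYsec i) (hstep i)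
    rw [prod_mul_distrib, prod_mul_distrib] at hsites
    have hZ := Zc_mul_poch_succ N T S s hs
    have h1 := poch_pos (by positivity : (0 : ℝ) < s + 1) N
    have h2 := poch_pos (by simpa using hs : (0 : ℝ) < T - s) N
    push_cast at hsites ⊢
    field_simp
    linear_combination congrArg₂ (· * ·) hsites hZ.symm
  · rw [if_neg hstep, if_neg fun h => hstep fun i => by rcases h i with h | h <;> omega,
      zero_mul, zero_mul]

theorem co_transition_general (N T S t : ℕ) (ht1 : 1 ≤ t) (ht : t ≤ T)
    (X : Fin N → ℤ) (hX : X ∈ Xcal N T S t)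
    (Y : Fin N → ℤ) (hY : Y ∈ Xcal N T S (t - 1)) :
    Ptm N T S t X Y = Ptp N T S (t - 1) Y X * rho N T S (t - 1) Y / rho N T S t X := by
  obtain ⟨s, rfl⟩ := Nat.exists_eq_add_of_le' ht1
  rw [Nat.add_sub_cancel] at hY ⊢
  rw [eq_div_iff (rho_pos N T S (s + 1) ht (mem_filter.mp hX).2).ne']
  exact Ptm_mul_rho_eq ht hX hY

/-- The co-transition probabilities are given by the stated formula: equivalently,
P^{S,t}_{t-}(x,y) = P^{S,t-1}_{t+}(y,x) · ρ_{S,t-1}(y) / ρ_{S,t}(x). -/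
theorem co_transition (N T S t : ℕ) (hN : 1 ≤ N) (hS : S ≤ T) (ht1 : 1 ≤ t) (ht : t ≤ T)
    (X : Fin N → ℤ) (hX : X ∈ Xcal N T S t)
    (Y : Fin N → ℤ) (hY : Y ∈ Xcal N T S (t - 1)) :
    Ptm N T S t X Y = Ptp N T S (t - 1) Y X * rho N T S (t - 1) Y / rho N T S t X :=
  co_transition_general N T S t ht1 ht X hX Y hY
end
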